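/- arXiv:2301.07375 — 5 statements merged into one kernel-verified Lean document; each statement's English description precedes it below -/
import Mathlib

section
/- Let F(x,y) = a₀x³ + 3a₁x²y + 3a₂xy² + a₃y³ over ℂ, and set D₁ = a₀a₂ − a₁², D₂ = a₀a₃ − a₁a₂, D₃ = a₁a₃ − a₂². Then there exist α₁, β₁, α₂, β₂ ∈ ℂ with α₁β₂ − α₂β₁ ≠ 0 and F(x,y) = (α₁x + β₁y)³ + (α₂x + β₂y)³ if and only if D₂² − 4D₁D₃ ≠ 0. -/
open Complex in
lemma cube_root_exists (c : ℂ) : ∃ u : ℂ, u^3 = c := by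
  have := Complex.isAlgClosed.exists_pow_nat_eq c (n := 3) (by norm_num)
  exact this

lemma key_lemma (a₀ a₁ a₂ a₃ : ℂ) (h1 : a₀*a₂ - a₁^2 ≠ 0)
    (hΔ : (a₀*a₃ - a₁*a₂)^2 - 4*(a₀*a₂ - a₁^2)*(a₁*a₃ - a₂^2) ≠ 0) :
    ∃ α₁ β₁ α₂ β₂ : ℂ, α₁*β₂ - α₂*β₁ ≠ 0 ∧ ∀ x y : ℂ,
        a₀*x^3 + 3*a₁*x^2*y + 3*a₂*x*y^2 + a₃*y^3
          = (α₁*x + β₁*y)^3 + (α₂*x + β₂*y)^3 := by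
  obtain ⟨s, hs⟩ := Complex.isAlgClosed.exists_pow_nat_eq
    ((a₀*a₃ - a₁*a₂)^2 - 4*(a₀*a₂ - a₁^2)*(a₁*a₃ - a₂^2)) (n := 2) (by norm_num)
  have hs0 : s ≠ 0 := by
    intro h; apply hΔ; rw [← hs, h]; ring
  obtain ⟨u, hu⟩ := cube_root_exists
    ((-2*(a₀*a₂ - a₁^2)*a₁ + a₀*(a₀*a₃ - a₁*a₂) + a₀*s) / (16*s*(a₀*a₂ - a₁^2)^3))
  obtain ⟨v, hv⟩ := cube_root_exists
    ((2*(a₀*a₂ - a₁^2)*a₁ - a₀*(a₀*a₃ - a₁*a₂) + a₀*s) / (16*s*(a₀*a₂ - a₁^2)^3))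
  have hden : 16*s*(a₀*a₂ - a₁^2)^3 ≠ 0 := by
    apply mul_ne_zero (mul_ne_zero (by norm_num) hs0) (pow_ne_zero _ h1)
  have hN : (-2*(a₀*a₂ - a₁^2)*a₁ + a₀*(a₀*a₃ - a₁*a₂) + a₀*s) *
      (2*(a₀*a₂ - a₁^2)*a₁ - a₀*(a₀*a₃ - a₁*a₂) + a₀*s) = 4*(a₀*a₂ - a₁^2)^3 := by
    linear_combination a₀^2 * hs
  have hN1 : (-2*(a₀*a₂ - a₁^2)*a₁ + a₀*(a₀*a₃ - a₁*a₂) + a₀*s) ≠ 0 := by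
    intro h; apply h1
    have h4 : (a₀*a₂ - a₁^2)^3 = 0 := by
      linear_combination (-1/4)*hN + ((2*(a₀*a₂ - a₁^2)*a₁ - a₀*(a₀*a₃ - a₁*a₂) + a₀*s)/4)*h
    exact pow_eq_zero_iff (by norm_num) |>.mp h4
  have hN2 : (2*(a₀*a₂ - a₁^2)*a₁ - a₀*(a₀*a₃ - a₁*a₂) + a₀*s) ≠ 0 := by
    intro h; apply h1
    have h4 : (a₀*a₂ - a₁^2)^3 = 0 := by
      linear_combination (-1/4)*hN + ((-2*(a₀*a₂ - a₁^2)*a₁ + a₀*(a₀*a₃ - a₁*a₂) + a₀*s)/4)*h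
    exact pow_eq_zero_iff (by norm_num) |>.mp h4
  have hu0 : u ≠ 0 := by
    intro h; apply hN1
    have h2 : (-2*(a₀*a₂ - a₁^2)*a₁ + a₀*(a₀*a₃ - a₁*a₂) + a₀*s)
        / (16*s*(a₀*a₂ - a₁^2)^3) = 0 := by rw [← hu, h]; norm_num
    rcases div_eq_zero_iff.mp h2 with h' | h'
    · exact h'
    · exact absurd h' hden
  have hv0 : v ≠ 0 := by
    intro h; apply hN2
    have h2 : (2*(a₀*a₂ - a₁^2)*a₁ - a₀*(a₀*a₃ - a₁*a₂) + a₀*s)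
        / (16*s*(a₀*a₂ - a₁^2)^3) = 0 := by rw [← hv, h]; norm_num
    rcases div_eq_zero_iff.mp h2 with h' | h'
    · exact h'
    · exact absurd h' hden
  refine ⟨2*(a₀*a₂ - a₁^2)*u, ((a₀*a₃ - a₁*a₂) - s)*u,
          2*(a₀*a₂ - a₁^2)*v, ((a₀*a₃ - a₁*a₂) + s)*v, ?_, ?_⟩
  · have : 2*(a₀*a₂ - a₁^2)*u * (((a₀*a₃ - a₁*a₂) + s)*v)
        - 2*(a₀*a₂ - a₁^2)*v * (((a₀*a₃ - a₁*a₂) - s)*u)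
        = 4*(a₀*a₂ - a₁^2)*s*u*v := by ring
    rw [this]
    exact mul_ne_zero (mul_ne_zero (mul_ne_zero
      (mul_ne_zero (by norm_num) h1) hs0) hu0) hv0
  · intro x y
    have expand : a₀*x^3 + 3*a₁*x^2*y + 3*a₂*x*y^2 + a₃*y^3
        = u^3 * (2*(a₀*a₂ - a₁^2)*x + ((a₀*a₃ - a₁*a₂) - s)*y)^3
        + v^3 * (2*(a₀*a₂ - a₁^2)*x + ((a₀*a₃ - a₁*a₂) + s)*y)^3 := by
      rw [hu, hv]
      field_simp
      linear_combination (-(4*s*(3*a₀^2*a₂*x*y^2 + a₀^2*a₃*y^3 - 3*a₀*a₁^2*x*y^2 - a₁^3*y^3))) * hs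
    rw [expand]; ring

theorem stmt10 (a₀ a₁ a₂ a₃ : ℂ)
    (D₁ D₂ D₃ : ℂ) (hD₁ : D₁ = a₀*a₂ - a₁^2) (hD₂ : D₂ = a₀*a₃ - a₁*a₂)
    (hD₃ : D₃ = a₁*a₃ - a₂^2) :
    (∃ α₁ β₁ α₂ β₂ : ℂ, α₁*β₂ - α₂*β₁ ≠ 0 ∧ ∀ x y : ℂ,
        a₀*x^3 + 3*a₁*x^2*y + 3*a₂*x*y^2 + a₃*y^3
          = (α₁*x + β₁*y)^3 + (α₂*x + β₂*y)^3) ↔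
      D₂^2 - 4*D₁*D₃ ≠ 0 := by
  subst hD₁ hD₂ hD₃
  constructor
  · rintro ⟨p, q, r, t, hdet, h⟩
    have e0 : a₀ = p^3 + r^3 := by linear_combination h 1 0
    have e3 : a₃ = q^3 + t^3 := by linear_combination h 0 1
    have e1 : a₁ = p^2*q + r^2*t := by
      linear_combination (h 1 1)/6 - (h 1 (-1))/6 - (h 0 1)/3
    have e2 : a₂ = p*q^2 + r*t^2 := by
      linear_combination (h 1 1)/6 + (h 1 (-1))/6 - (h 1 0)/3
    have : (a₀*a₃ - a₁*a₂)^2 - 4*(a₀*a₂ - a₁^2)*(a₁*a₃ - a₂^2)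
        = (p*t - r*q)^6 := by
      rw [e0, e1, e2, e3]; ring
    rw [this]
    exact pow_ne_zero _ hdet
  · intro hΔ
    by_cases h1 : a₀*a₂ - a₁^2 ≠ 0
    · exact key_lemma a₀ a₁ a₂ a₃ h1 hΔ
    · push_neg at h1
      by_cases h3 : a₁*a₃ - a₂^2 ≠ 0
      · obtain ⟨α₁, β₁, α₂, β₂, hdet, h⟩ := key_lemma a₃ a₂ a₁ a₀ (by intro hc; apply h3; linear_combination hc) (by
          intro hc; apply hΔ; linear_combination hc)
        refine ⟨β₁, α₁, β₂, α₂, ?_, ?_⟩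
        · intro hc; apply hdet; linear_combination -hc
        · intro x y; linear_combination h y x
      · push_neg at h3
        have hD2 : a₀*a₃ - a₁*a₂ ≠ 0 := by
          intro hc; apply hΔ
          rw [h1, h3, hc]; ring
        have ha1 : a₁ = 0 := by
          have : (a₀*a₃ - a₁*a₂) * a₁ = 0 := by linear_combination a₀*h3 + a₂*h1
          rcases mul_eq_zero.mp this with h | h
          · exact absurd h hD2
          · exact h
        have ha2 : a₂ = 0 := by
          have : a₂^2 = 0 := by linear_combination -h3 + a₃*ha1
          exact pow_eq_zero_iff (by norm_num) |>.mp this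
        obtain ⟨u, hu⟩ := cube_root_exists a₀
        obtain ⟨v, hv⟩ := cube_root_exists a₃
        have ha0 : a₀ ≠ 0 := by
          intro hc; apply hD2; rw [hc, ha1]; ring
        have ha3 : a₃ ≠ 0 := by
          intro hc; apply hD2; rw [hc, ha2]; ring
        refine ⟨u, 0, 0, v, ?_, ?_⟩
        · have : u*v - 0*0 = u*v := by ring
          rw [this]
          exact mul_ne_zero (fun h => ha0 (by rw [← hu, h]; ring))
            (fun h => ha3 (by rw [← hv, h]; ring))
        · intro x y
          rw [ha1, ha2]
          linear_combination -x^3*hu - y^3*hv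
end

section
/- Let f(x) = a₀x³ + 3a₁x² + 3a₂x + a₃ over ℂ with D₁ = a₀a₂ − a₁² ≠ 0, D₂ = a₀a₃ − a₁a₂, D₃ = a₁a₃ − a₂², and D₂² − 4D₁D₃ ≠ 0. Let λ₁ ≠ λ₂ be the roots of λ² − D₂λ + D₁D₃ = 0 and suppose γ ∈ ℂ satisfies γ³ = (λ₂a₀ − D₁a₁)/(λ₁a₀ − D₁a₁). Let ω = e^{2πi/3}. Then for each i = 0, 1, 2 with γωⁱ ≠ 1, the number xᵢ = (γωⁱλ₁ − λ₂)/(D₁(1 − γωⁱ)) satisfies f(xᵢ) = 0. -/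
/-!
The substitution `x = (t λ₁ - λ₂) / (D₁ (1 - t))` turns the cubic into a multiple of the pure cube
equation `t³ (λ₁ a₀ - D₁ a₁) = λ₂ a₀ - D₁ a₁`: clearing denominators,
`D₁³ (1 - t)³ f(x) = (λ₁ - λ₂)² (t³ (λ₁ a₀ - D₁ a₁) - (λ₂ a₀ - D₁ a₁))`,
an identity that only uses Vieta's relations `λ₁ + λ₂ = D₂`, `λ₁ λ₂ = D₁ D₃`. Every cube root
`γ ωⁱ` of the right-hand ratio therefore gives a root of `f`.
-/

open Complex

theorem add_eq_and_mul_eq_of_quadratic_roots {K : Type*} [Field K] {s p x y : K}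
    (hx : x^2 - s*x + p = 0) (hy : y^2 - s*y + p = 0) (hne : x ≠ y) :
    x + y = s ∧ x * y = p := by
  have hsum : x + y = s := by
    have h : (x - y) * (x + y - s) = 0 := by linear_combination hx - hy
    exact sub_eq_zero.mp ((mul_eq_zero.mp h).resolve_left (sub_ne_zero.mpr hne))
  exact ⟨hsum, by linear_combination x * hsum - hx⟩

section Moebius

variable {K : Type*} [Field K] {a₀ a₁ a₂ a₃ D₁ D₂ D₃ l₁ l₂ : K}

theorem cubic_homogenized_moebius_eq (hD₁ : D₁ = a₀*a₂ - a₁^2) (hD₂ : D₂ = a₀*a₃ - a₁*a₂)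
    (hD₃ : D₃ = a₁*a₃ - a₂^2) (hs : l₁ + l₂ = D₂) (hp : l₁ * l₂ = D₁ * D₃) (t : K) :
    a₀*(t*l₁ - l₂)^3 + 3*a₁*(t*l₁ - l₂)^2*(D₁*(1 - t))
        + 3*a₂*(t*l₁ - l₂)*(D₁*(1 - t))^2 + a₃*(D₁*(1 - t))^3
      = (l₁ - l₂)^2 * (t^3*(l₁*a₀ - D₁*a₁) - (l₂*a₀ - D₁*a₁)) := by
  have he₁ : D₁*a₁*(l₁ + l₂) - a₀*(l₁*l₂) = a₂*D₁^2 := by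
    rw [hs, hp, hD₁, hD₂, hD₃]; ring
  have he₀ : D₁*a₁*((l₁ + l₂)^2 - l₁*l₂) - a₀*(l₁*l₂)*(l₁ + l₂) = a₃*D₁^3 := by
    rw [hs, hp, hD₁, hD₂, hD₃]; ring
  linear_combination -3*(t*l₁ - l₂)*(1 - t)^2 * he₁ - (1 - t)^3 * he₀

theorem moebius_coeff_mul_eq_neg_cube (hD₁ : D₁ = a₀*a₂ - a₁^2) (hD₂ : D₂ = a₀*a₃ - a₁*a₂)
    (hD₃ : D₃ = a₁*a₃ - a₂^2) (hs : l₁ + l₂ = D₂) (hp : l₁ * l₂ = D₁ * D₃) :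
    (l₁*a₀ - D₁*a₁) * (l₂*a₀ - D₁*a₁) = -D₁^3 := by
  subst hD₁ hD₂ hD₃
  linear_combination a₀^2 * hp - (a₀*a₂ - a₁^2)*a₁*a₀ * hs

theorem cubic_eval_moebius_eq_zero (hD₁ : D₁ = a₀*a₂ - a₁^2) (hD₂ : D₂ = a₀*a₃ - a₁*a₂)
    (hD₃ : D₃ = a₁*a₃ - a₂^2) (hD₁ne : D₁ ≠ 0) (hs : l₁ + l₂ = D₂) (hp : l₁ * l₂ = D₁ * D₃)
    {t : K} (ht : t^3 = (l₂*a₀ - D₁*a₁)/(l₁*a₀ - D₁*a₁)) (ht₁ : t ≠ 1) :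
    a₀ * ((t*l₁ - l₂)/(D₁*(1 - t)))^3 + 3*a₁ * ((t*l₁ - l₂)/(D₁*(1 - t)))^2
      + 3*a₂ * ((t*l₁ - l₂)/(D₁*(1 - t))) + a₃ = 0 := by
  have hA : l₁*a₀ - D₁*a₁ ≠ 0 := fun h ↦ by
    have := moebius_coeff_mul_eq_neg_cube hD₁ hD₂ hD₃ hs hp
    rw [h, zero_mul, zero_eq_neg] at this
    exact hD₁ne (pow_eq_zero_iff three_ne_zero |>.mp this)
  have hcube : t^3*(l₁*a₀ - D₁*a₁) - (l₂*a₀ - D₁*a₁) = 0 := by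
    rw [ht, div_mul_cancel₀ _ hA, sub_self]
  have hden : D₁*(1 - t) ≠ 0 := mul_ne_zero hD₁ne (sub_ne_zero.mpr ht₁.symm)
  have hnum := cubic_homogenized_moebius_eq hD₁ hD₂ hD₃ hs hp t
  rw [hcube, mul_zero] at hnum
  field_simp
  linear_combination hnum

end Moebius

theorem stmt12_general (a₀ a₁ a₂ a₃ : ℂ)
    (D₁ D₂ D₃ : ℂ) (hD₁ : D₁ = a₀*a₂ - a₁^2) (hD₂ : D₂ = a₀*a₃ - a₁*a₂)
    (hD₃ : D₃ = a₁*a₃ - a₂^2)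
    (hD₁ne : D₁ ≠ 0)
    (l₁ l₂ : ℂ) (hroot₁ : l₁^2 - D₂*l₁ + D₁*D₃ = 0)
    (hroot₂ : l₂^2 - D₂*l₂ + D₁*D₃ = 0) (hne : l₁ ≠ l₂)
    (γ ω : ℂ) (hγ : γ^3 = (l₂*a₀ - D₁*a₁)/(l₁*a₀ - D₁*a₁))
    (hω : ω = Complex.exp (2 * Real.pi * Complex.I / 3)) :
    ∀ i : Fin 3, γ * ω^(i : ℕ) ≠ 1 →
      a₀ * ((γ*ω^(i : ℕ)*l₁ - l₂)/(D₁*(1 - γ*ω^(i : ℕ))))^3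
        + 3*a₁ * ((γ*ω^(i : ℕ)*l₁ - l₂)/(D₁*(1 - γ*ω^(i : ℕ))))^2
        + 3*a₂ * ((γ*ω^(i : ℕ)*l₁ - l₂)/(D₁*(1 - γ*ω^(i : ℕ))))
        + a₃ = 0 := by
  intro i hi
  obtain ⟨hs, hp⟩ := add_eq_and_mul_eq_of_quadratic_roots hroot₁ hroot₂ hne
  have hω₃ : ω^3 = 1 := by
    simpa [hω] using (isPrimitiveRoot_exp 3 three_ne_zero).pow_eq_one
  have hcube : (γ * ω^(i : ℕ))^3 = γ^3 := by
    rw [mul_pow, ← pow_mul, mul_comm (i : ℕ) 3, pow_mul, hω₃, one_pow, mul_one]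
  exact cubic_eval_moebius_eq_zero hD₁ hD₂ hD₃ hD₁ne hs hp (hcube.trans hγ) hi

theorem stmt12 (a₀ a₁ a₂ a₃ : ℂ)
    (D₁ D₂ D₃ : ℂ) (hD₁ : D₁ = a₀*a₂ - a₁^2) (hD₂ : D₂ = a₀*a₃ - a₁*a₂)
    (hD₃ : D₃ = a₁*a₃ - a₂^2)
    (hD₁ne : D₁ ≠ 0) (hdisc : D₂^2 - 4*D₁*D₃ ≠ 0)
    (l₁ l₂ : ℂ) (hroot₁ : l₁^2 - D₂*l₁ + D₁*D₃ = 0)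
    (hroot₂ : l₂^2 - D₂*l₂ + D₁*D₃ = 0) (hne : l₁ ≠ l₂)
    (γ ω : ℂ) (hγ : γ^3 = (l₂*a₀ - D₁*a₁)/(l₁*a₀ - D₁*a₁))
    (hω : ω = Complex.exp (2 * Real.pi * Complex.I / 3)) :
    ∀ i : Fin 3, γ * ω^(i : ℕ) ≠ 1 →
      a₀ * ((γ*ω^(i : ℕ)*l₁ - l₂)/(D₁*(1 - γ*ω^(i : ℕ))))^3
        + 3*a₁ * ((γ*ω^(i : ℕ)*l₁ - l₂)/(D₁*(1 - γ*ω^(i : ℕ))))^2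
        + 3*a₂ * ((γ*ω^(i : ℕ)*l₁ - l₂)/(D₁*(1 - γ*ω^(i : ℕ))))
        + a₃ = 0 :=
  stmt12_general a₀ a₁ a₂ a₃ D₁ D₂ D₃ hD₁ hD₂ hD₃ hD₁ne l₁ l₂ hroot₁ hroot₂ hne γ ω hγ hω
end

section
/- Let f(x) = a₀x^d + C(d,1)a₁x^{d−1} + ... + C(d,d−1)a_{d−1}x + a_d over ℂ with d ≥ 3 and not all aᵢ zero. Then f(x) = (αx + β)^d for some α, β ∈ ℂ if and only if aᵢa_{i+2} = a_{i+1}² for all 0 ≤ i ≤ d−2 and the proportionality a₀ : a₁ = a₁ : a₂ = ... = a_{d−1} : a_d holds (equivalently, the (d−1)×3 Hankel matrix with rows (a_{i}, a_{i+1}, a_{i+2}), 0 ≤ i ≤ d−2, has rank at most 1). -/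
/-!
Expanding `(α x + β) ^ d` binomially and comparing coefficients (the binomial coefficients are
nonzero in characteristic zero), `f = (α x + β) ^ d` exactly when `a i = α ^ (d - i) * β ^ i` for
`i ≤ d`. For such a sequence the Hankel matrix `(a (i + j))` is the outer product of
`(α ^ (d - 2 - i) * β ^ i)_i` and `(α ^ (2 - j) * β ^ j)_j`, hence has rank at most one.
Conversely, rank at most one makes all `2 × 2` minors vanish, which for `d ≥ 3` gives
`a i * a (j + 1) = a (i + 1) * a j` for all `i, j < d`. If `a 0 ≠ 0` the sequence is geometric,
`a i = a 0 * r ^ i`; if `a 0 = 0` the relations `a (i + 1) ^ 2 = a i * a (i + 2)` force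
`a 1 = ⋯ = a (d - 1) = 0`. In both cases a `d`-th root taken in `ℂ` produces `α` and `β`.
-/

open Polynomial Finset

theorem coeff_sum_range_C_mul_X_pow {R : Type*} [Semiring R] (b : ℕ → R) {n j : ℕ} (hj : j < n) :
    (∑ i ∈ range n, C (b i) * X ^ i).coeff j = b j := by
  simp only [finsetSum_coeff, coeff_C_mul_X_pow, Finset.sum_ite_eq, mem_range, hj, if_true]

theorem eq_of_forall_sum_range_mul_pow_eq {K : Type*} [Field K] [Infinite K] {n : ℕ} {b c : ℕ → K}
    (h : ∀ x : K, ∑ i ∈ range n, b i * x ^ i = ∑ i ∈ range n, c i * x ^ i) {j : ℕ} (hj : j < n) :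
    b j = c j := by
  have hpoly : ∑ i ∈ range n, C (b i) * X ^ i = ∑ i ∈ range n, C (c i) * X ^ i :=
    Polynomial.funext fun x => by simpa [eval_finsetSum] using h x
  rw [← coeff_sum_range_C_mul_X_pow b hj, hpoly, coeff_sum_range_C_mul_X_pow c hj]

theorem eq_of_forall_sum_range_mul_pow_sub_eq {K : Type*} [Field K] [Infinite K] {d : ℕ}
    {b c : ℕ → K}
    (h : ∀ x : K, ∑ i ∈ range (d + 1), b i * x ^ (d - i) = ∑ i ∈ range (d + 1), c i * x ^ (d - i))
    {i : ℕ} (hi : i ≤ d) : b i = c i := by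
  have hrev (e : ℕ → K) (x : K) :
      ∑ i ∈ range (d + 1), e i * x ^ (d - i) = ∑ j ∈ range (d + 1), e (d - j) * x ^ j := by
    rw [← sum_range_reflect]
    refine sum_congr rfl fun j hj => ?_
    rw [show d + 1 - 1 - j = d - j by omega, Nat.sub_sub_self (by simpa [Nat.lt_succ_iff] using hj)]
  have := eq_of_forall_sum_range_mul_pow_eq (b := fun j => b (d - j)) (c := fun j => c (d - j))
    (fun x => by simpa only [hrev] using h x) (j := d - i) (by omega)
  simpa [Nat.sub_sub_self hi] using this

theorem add_pow_eq_sum_choose_mul_pow {R : Type*} [CommSemiring R] (α β x : R) (d : ℕ) :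
    (α * x + β) ^ d =
      ∑ i ∈ range (d + 1), (d.choose i : R) * (α ^ (d - i) * β ^ i) * x ^ (d - i) := by
  rw [add_comm, add_pow]
  refine sum_congr rfl fun i _ => ?_
  ring

theorem sum_choose_mul_pow_eq_add_pow_iff {K : Type*} [Field K] [CharZero K] (d : ℕ) (a : ℕ → K)
    (α β : K) :
    (∀ x : K, ∑ i ∈ range (d + 1), (d.choose i : K) * a i * x ^ (d - i) = (α * x + β) ^ d) ↔
      ∀ i ≤ d, a i = α ^ (d - i) * β ^ i := by
  simp only [add_pow_eq_sum_choose_mul_pow]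
  refine ⟨fun h i hi => ?_, fun h x => sum_congr rfl fun i hi => ?_⟩
  · have hchoose : (d.choose i : K) ≠ 0 := by exact_mod_cast (Nat.choose_pos hi).ne'
    exact mul_left_cancel₀ hchoose (eq_of_forall_sum_range_mul_pow_sub_eq h hi)
  · rw [h i (by simpa [Nat.lt_succ_iff] using hi)]

theorem Matrix.mul_mul_eq_of_rank_le_one {K m n : Type*} [Field K] [Finite m] [Fintype n]
    (M : Matrix m n K) (h : M.rank ≤ 1) (i i' : m) (j j' : n) :
    M i j * M i' j' = M i j' * M i' j := by
  rw [M.rank_eq_finrank_span_row, finrank_le_one_iff] at h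
  obtain ⟨v, hv⟩ := h
  obtain ⟨r, hr⟩ := hv ⟨M i, Submodule.subset_span ⟨i, rfl⟩⟩
  obtain ⟨r', hr'⟩ := hv ⟨M i', Submodule.subset_span ⟨i', rfl⟩⟩
  have hr := congrArg Subtype.val hr
  have hr' := congrArg Subtype.val hr'
  simp only [SetLike.val_smul] at hr hr'
  rw [← hr, ← hr']
  simp only [Pi.smul_apply, smul_eq_mul]
  ring

theorem exists_eq_pow_mul_pow_of_mul_succ_eq {K : Type*} [Field K] [IsAlgClosed K] {d : ℕ}
    (hd : 0 < d) {a : ℕ → K} (h : ∀ i j, i < d → j < d → a i * a (j + 1) = a (i + 1) * a j) :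
    ∃ α β : K, ∀ i ≤ d, a i = α ^ (d - i) * β ^ i := by
  by_cases ha0 : a 0 = 0
  · -- the squares `a (i+1) ^ 2 = a i * a (i+2)` propagate the zero up to `a (d-1)`
    have hzero : ∀ i < d, a i = 0 := by
      intro i
      induction i with
      | zero => exact fun _ => ha0
      | succ i ih =>
        intro hi
        have hsq := h i (i + 1) (by omega) (by omega)
        rw [ih (by omega), zero_mul] at hsq
        exact mul_self_eq_zero.mp hsq.symm
    obtain ⟨β, hβ⟩ := IsAlgClosed.exists_pow_nat_eq (a d) hd
    refine ⟨0, β, fun i hi => ?_⟩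
    rcases hi.lt_or_eq with hi | rfl
    · rw [hzero i hi, zero_pow (by omega), zero_mul]
    · rw [Nat.sub_self, pow_zero, one_mul, hβ]
  · have hgeom : ∀ i ≤ d, a i = a 0 * (a 1 / a 0) ^ i := by
      intro i
      induction i with
      | zero => simp
      | succ i ih =>
        intro hi
        have hstep := h 0 i hd (by omega)
        rw [pow_succ, ← mul_assoc, ← ih (by omega)]
        field_simp
        linear_combination hstep
    obtain ⟨α, hα⟩ := IsAlgClosed.exists_pow_nat_eq (a 0) hd
    refine ⟨α, α * (a 1 / a 0), fun i hi => ?_⟩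
    rw [hgeom i hi, ← hα, mul_pow, ← mul_assoc, ← pow_add, Nat.sub_add_cancel hi]

theorem rank_hankel_le_one_of_eq_pow_mul_pow {K : Type*} [CommSemiring K] [StrongRankCondition K]
    {d : ℕ} {a : ℕ → K} {α β : K}
    (h : ∀ i ≤ d, a i = α ^ (d - i) * β ^ i) {m n : ℕ} (hmn : m + n ≤ d + 2) :
    (Matrix.of fun (i : Fin m) (j : Fin n) => a (i + j)).rank ≤ 1 := by
  have hsplit : (Matrix.of fun (i : Fin m) (j : Fin n) => a (i + j)) =
      Matrix.vecMulVec (fun i : Fin m => α ^ (m - 1 - i) * β ^ (i : ℕ))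
        (fun j : Fin n => α ^ (d + 1 - m - j) * β ^ (j : ℕ)) := by
    ext i j
    have hi := i.isLt
    have hj := j.isLt
    rw [Matrix.of_apply, Matrix.vecMulVec_apply, h _ (by omega),
      show d - (i + j) = (m - 1 - i) + (d + 1 - m - j) by omega, pow_add, pow_add]
    ring
  exact hsplit ▸ Matrix.rank_vecMulVec_le _ _

theorem mul_succ_eq_of_rank_hankel_le_one {K : Type*} [Field K] {d : ℕ} (hd : 3 ≤ d) {a : ℕ → K}
    (h : (Matrix.of fun (i : Fin (d - 1)) (j : Fin 3) => a (i + j)).rank ≤ 1) :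
    ∀ i j, i < d → j < d → a i * a (j + 1) = a (i + 1) * a j := by
  have minor : ∀ i i' j j', i ≤ d - 2 → i' ≤ d - 2 → j ≤ 2 → j' ≤ 2 →
      a (i + j) * a (i' + j') = a (i + j') * a (i' + j) := fun i i' j j' hi hi' hj hj' =>
    Matrix.mul_mul_eq_of_rank_le_one _ h ⟨i, by omega⟩ ⟨i', by omega⟩ ⟨j, by omega⟩ ⟨j', by omega⟩
  -- the two windows `j ∈ {0,1}` and `j ∈ {1,2}` cover all pairs except `{0, d-1}`
  have corner : a 0 * a d = a 1 * a (d - 1) := by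
    have h02 : a 0 * a d = a 2 * a (d - 2) := by
      simpa [show d - 2 + 2 = d by omega] using
        minor 0 (d - 2) 0 2 (by omega) le_rfl (by omega) le_rfl
    have h12 : a 1 * a (d - 1) = a 2 * a (d - 2) := by
      simpa [show d - 2 + 1 = d - 1 by omega] using
        minor 1 (d - 2) 0 1 (by omega) le_rfl (by omega) (by omega)
    rw [h02, h12]
  intro i j hi hj
  by_cases hlow : i ≤ d - 2 ∧ j ≤ d - 2
  · simpa using minor i j 0 1 hlow.1 hlow.2 (by omega) (by omega)
  by_cases hhigh : 1 ≤ i ∧ 1 ≤ j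
  · have := minor (i - 1) (j - 1) 1 2 (by omega) (by omega) (by omega) le_rfl
    rwa [show i - 1 + 1 = i by omega, show j - 1 + 2 = j + 1 by omega,
      show i - 1 + 2 = i + 1 by omega, show j - 1 + 1 = j by omega] at this
  rcases (show (i = 0 ∧ j = d - 1) ∨ (i = d - 1 ∧ j = 0) by omega) with ⟨rfl, rfl⟩ | ⟨rfl, rfl⟩
  · rw [Nat.sub_add_cancel (by omega), corner]
  · rw [zero_add, Nat.sub_add_cancel (by omega)]
    linear_combination -corner

theorem stmt16_general (d : ℕ) (hd : 3 ≤ d) (a : ℕ → ℂ) :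
    (∃ α β : ℂ, ∀ x : ℂ,
        ∑ i ∈ Finset.range (d+1), (d.choose i : ℂ) * a i * x^(d-i) = (α*x + β)^d) ↔
      (Matrix.of fun (i : Fin (d-1)) (j : Fin 3) => a ((i : ℕ) + (j : ℕ))).rank ≤ 1 := by
  simp only [sum_choose_mul_pow_eq_add_pow_iff]
  constructor
  · rintro ⟨α, β, h⟩
    exact rank_hankel_le_one_of_eq_pow_mul_pow h (by omega)
  · intro h
    exact exists_eq_pow_mul_pow_of_mul_succ_eq (by omega) (mul_succ_eq_of_rank_hankel_le_one hd h)

theorem stmt16 (d : ℕ) (hd : 3 ≤ d) (a : ℕ → ℂ)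
    (hne : ¬ ∀ i ≤ d, a i = 0) :
    (∃ α β : ℂ, ∀ x : ℂ,
        ∑ i ∈ Finset.range (d+1), (d.choose i : ℂ) * a i * x^(d-i) = (α*x + β)^d) ↔
      (Matrix.of fun (i : Fin (d-1)) (j : Fin 3) => a ((i : ℕ) + (j : ℕ))).rank ≤ 1 :=
  stmt16_general d hd a
end

section
/- Let f(x) = a₀x^d + C(d,1)a₁x^{d−1} + ... + C(d,d−1)a_{d−1}x + a_d over ℂ, d ≥ 3, a₀ ≠ 0. Set D₁ = a₀a₂ − a₁², D₂ = a₀a₃ − a₁a₂, D₃ = a₁a₃ − a₂². Assume the Hankel matrix with rows (aᵢ, a_{i+1}, a_{i+2}) for 0 ≤ i ≤ d−2 has rank 2, D₁ ≠ 0, and D₂² ≠ 4D₁D₃. Let λ₁ ≠ λ₂ be the roots of λ² − D₂λ + D₁D₃ = 0. Then f(x) = ((λ₂a₀ − D₁a₁)/(λ₂ − λ₁))·(x + λ₁/D₁)^d + ((λ₁a₀ − D₁a₁)/(λ₁ − λ₂))·(x + λ₂/D₁)^d, and for any δ with δ^d = (λ₂a₀ − D₁a₁)/(λ₁a₀ −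 D₁a₁) and any d-th root of unity ζ with δζ ≠ 1, x = (δζλ₁ − λ₂)/(D₁(1 − δζ)) is a root of f. -/
/-!
A kernel vector `c` of the rank-two Hankel matrix gives a three-term recurrence
`c₀ aᵢ + c₁ aᵢ₊₁ + c₂ aᵢ₊₂ = 0`; since `D₁ ≠ 0`, `c₂ ≠ 0` and the recurrence is
`D₁ aᵢ₊₂ = D₂ aᵢ₊₁ - D₃ aᵢ`, whose characteristic roots are `μⱼ = λⱼ / D₁`. Hence
`aᵢ = A μ₁ⁱ + B μ₂ⁱ`, and the binomial theorem turns this into `f = A (x + μ₁)ᵈ + B (x + μ₂)ᵈ`.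
Here `B ≠ 0`, as otherwise the Hankel matrix would have rank at most one, so `f(x) = 0` whenever
`x + μ₂ = w (x + μ₁)` with `wᵈ = -A / B`; solving for `x` with `w = δζ` gives the stated roots.
-/

open Finset

theorem Matrix.exists_mulVec_eq_zero_of_rank_lt {K m n : Type*} [Field K] [Fintype n]
    (M : Matrix m n K) (h : M.rank < Fintype.card n) : ∃ c : n → K, c ≠ 0 ∧ M.mulVec c = 0 := by
  have hdim := LinearMap.finrank_range_add_finrank_ker M.mulVecLin
  rw [Module.finrank_fintype_fun_eq_card] at hdim
  obtain ⟨c, hc⟩ := (Module.finrank_pos_iff_exists_ne_zero (R := K)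
    (M := LinearMap.ker M.mulVecLin)).mp (by rw [Matrix.rank] at h; omega)
  exact ⟨c, by simpa using hc, c.2⟩

def hankel {R : Type*} (a : ℕ → R) (m n : ℕ) : Matrix (Fin m) (Fin n) R :=
  Matrix.of fun i j => a (i + j)

section

variable {K : Type*} [Field K]

theorem rank_hankel_le_one_of_eq_geometric {a : ℕ → K} {m n : ℕ} (A μ : K)
    (h : ∀ i < m, ∀ j < n, a (i + j) = A * μ ^ (i + j)) : (hankel a m n).rank ≤ 1 := by
  have hvec : hankel a m n = Matrix.vecMulVec (fun i : Fin m => A * μ ^ (i : ℕ))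
      (fun j : Fin n => μ ^ (j : ℕ)) := by
    ext i j
    rw [hankel, Matrix.of_apply, Matrix.vecMulVec_apply, h i i.2 j j.2, pow_add, mul_assoc]
  exact hvec ▸ Matrix.rank_vecMulVec_le _ _

theorem hankel_recurrence_of_rank_eq_two {a : ℕ → K} {m : ℕ} (hrank : (hankel a m 3).rank = 2)
    (hD₁ : a 0 * a 2 - a 1 ^ 2 ≠ 0) (i : ℕ) (hi : i < m) :
    (a 0 * a 2 - a 1 ^ 2) * a (i + 2)
      = (a 0 * a 3 - a 1 * a 2) * a (i + 1) - (a 1 * a 3 - a 2 ^ 2) * a i := by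
  obtain ⟨c, hc, hker⟩ := (hankel a m 3).exists_mulVec_eq_zero_of_rank_lt (by simp [hrank])
  have hrow : ∀ i < m, c 0 * a i + c 1 * a (i + 1) + c 2 * a (i + 2) = 0 := fun i hi => by
    simpa [hankel, Matrix.mulVec, dotProduct, Fin.sum_univ_three, mul_comm, add_assoc]
      using congrFun hker ⟨i, hi⟩
  have hm : 2 ≤ m := hrank ▸ (hankel a m 3).rank_le_height
  have h₀ := hrow 0 (by omega)
  have h₁ := hrow 1 (by omega)
  simp only [zero_add, Nat.reduceAdd] at h₀ h₁
  -- If `c₂ = 0`, then `(c₀, c₁)` lies in the kernel of `[[a₀, a₁], [a₁, a₂]]`, of determinant `D₁`.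
  have hc₂ : c 2 ≠ 0 := by
    intro hc₂
    rw [hc₂, zero_mul, add_zero] at h₀ h₁
    have hc₀ : c 0 * (a 0 * a 2 - a 1 ^ 2) = 0 := by linear_combination a 2 * h₀ - a 1 * h₁
    have hc₁ : c 1 * (a 0 * a 2 - a 1 ^ 2) = 0 := by linear_combination a 0 * h₁ - a 1 * h₀
    refine hc (funext fun j => ?_)
    fin_cases j
    exacts [(mul_eq_zero.mp hc₀).resolve_right hD₁, (mul_eq_zero.mp hc₁).resolve_right hD₁, hc₂]
  refine mul_left_cancel₀ hc₂ ?_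
  linear_combination (a 0 * a 2 - a 1 ^ 2) * hrow i hi - a (i + 1) * (a 0 * h₁ - a 1 * h₀)
    + a i * (a 1 * h₁ - a 2 * h₀)

theorem eq_binet_of_recurrence {u : ℕ → K} {p q r μ₁ μ₂ : K} {N : ℕ}
    (hp : p ≠ 0) (hμ : μ₁ ≠ μ₂) (hμ₁ : p * μ₁ ^ 2 = q * μ₁ - r) (hμ₂ : p * μ₂ ^ 2 = q * μ₂ - r)
    (hrec : ∀ n, n + 2 ≤ N → p * u (n + 2) = q * u (n + 1) - r * u n) :
    ∀ n ≤ N, u n = (μ₂ * u 0 - u 1) / (μ₂ - μ₁) * μ₁ ^ n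
      + (μ₁ * u 0 - u 1) / (μ₁ - μ₂) * μ₂ ^ n := by
  have h₁₂ : μ₁ - μ₂ ≠ 0 := sub_ne_zero.mpr hμ
  have h₂₁ : μ₂ - μ₁ ≠ 0 := sub_ne_zero.mpr hμ.symm
  set A := (μ₂ * u 0 - u 1) / (μ₂ - μ₁)
  set B := (μ₁ * u 0 - u 1) / (μ₁ - μ₂)
  intro n
  induction n using Nat.strong_induction_on with
  | _ n ih =>
    match n with
    | 0 => intro; simp only [A, B]; field_simp; ring
    | 1 => intro; simp only [A, B]; field_simp; ring
    | n + 2 =>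
      intro hn
      refine mul_left_cancel₀ hp ?_
      linear_combination hrec n hn + q * ih (n + 1) (by omega) (by omega)
        - r * ih n (by omega) (by omega) - A * μ₁ ^ n * hμ₁ - B * μ₂ ^ n * hμ₂

theorem add_mul_pow_eq_zero_of_pow_eq {A B w x μ₁ μ₂ : K} {d : ℕ}
    (hB : B ≠ 0) (hw : w ^ d = -A / B) (hx : x + μ₂ = w * (x + μ₁)) :
    A * (x + μ₁) ^ d + B * (x + μ₂) ^ d = 0 := by
  rw [hx, mul_pow, hw]
  field_simp
  ring

end

theorem sum_choose_mul_pow_eq_of_binet {R : Type*} [CommSemiring R] {u : ℕ → R} {A B μ₁ μ₂ : R}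
    {d : ℕ} (hu : ∀ i ≤ d, u i = A * μ₁ ^ i + B * μ₂ ^ i) (x : R) :
    ∑ i ∈ range (d + 1), (d.choose i : R) * u i * x ^ (d - i)
      = A * (x + μ₁) ^ d + B * (x + μ₂) ^ d := by
  rw [add_comm x, add_comm x, add_pow, add_pow, mul_sum, mul_sum, ← sum_add_distrib]
  refine sum_congr rfl fun i hi => ?_
  rw [hu i (Nat.lt_succ_iff.mp (mem_range.mp hi))]
  ring

theorem stmt17_general (d : ℕ) (a : ℕ → ℂ)
    (D₁ D₂ D₃ : ℂ) (hD₁ : D₁ = a 0 * a 2 - (a 1)^2) (hD₂ : D₂ = a 0 * a 3 - a 1 * a 2)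
    (hD₃ : D₃ = a 1 * a 3 - (a 2)^2)
    (hrank : (Matrix.of fun (i : Fin (d-1)) (j : Fin 3) => a ((i : ℕ) + (j : ℕ))).rank = 2)
    (hD₁ne : D₁ ≠ 0)
    (l₁ l₂ : ℂ) (hroot₁ : l₁^2 - D₂*l₁ + D₁*D₃ = 0)
    (hroot₂ : l₂^2 - D₂*l₂ + D₁*D₃ = 0) (hne : l₁ ≠ l₂) :
    (∀ x : ℂ,
      ∑ i ∈ Finset.range (d+1), (d.choose i : ℂ) * a i * x^(d-i)
        = (l₂ * a 0 - D₁ * a 1)/(l₂ - l₁) * (x + l₁/D₁)^d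
          + (l₁ * a 0 - D₁ * a 1)/(l₁ - l₂) * (x + l₂/D₁)^d) ∧
    ∀ δ ζ : ℂ, δ^d = (l₂ * a 0 - D₁ * a 1)/(l₁ * a 0 - D₁ * a 1) → ζ^d = 1 →
      δ*ζ ≠ 1 →
      ∑ i ∈ Finset.range (d+1),
          (d.choose i : ℂ) * a i * ((δ*ζ*l₁ - l₂)/(D₁*(1 - δ*ζ)))^(d-i) = 0 := by
  have hrec : ∀ n, n + 2 ≤ d → D₁ * a (n + 2) = D₂ * a (n + 1) - D₃ * a n := fun n hn => by
    subst hD₁ hD₂ hD₃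
    exact hankel_recurrence_of_rank_eq_two (m := d - 1) hrank hD₁ne n (by omega)
  have hroot : ∀ l : ℂ, l ^ 2 - D₂ * l + D₁ * D₃ = 0 → D₁ * (l / D₁) ^ 2 = D₂ * (l / D₁) - D₃ :=
    fun l hl => by field_simp; linear_combination hl
  have hl : l₁ / D₁ ≠ l₂ / D₁ := fun h => hne (by simpa [hD₁ne] using h)
  have h₁₂ : l₁ - l₂ ≠ 0 := sub_ne_zero.mpr hne
  have h₂₁ : l₂ - l₁ ≠ 0 := sub_ne_zero.mpr hne.symm
  set A := (l₂ * a 0 - D₁ * a 1) / (l₂ - l₁)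
  set B := (l₁ * a 0 - D₁ * a 1) / (l₁ - l₂)
  have hform : ∀ i ≤ d, a i = A * (l₁ / D₁) ^ i + B * (l₂ / D₁) ^ i := by
    convert eq_binet_of_recurrence hD₁ne hl (hroot l₁ hroot₁) (hroot l₂ hroot₂) hrec using 5
      <;> simp only [A, B] <;> field_simp
  refine ⟨sum_choose_mul_pow_eq_of_binet hform, fun δ ζ hδ hζ hδζ => ?_⟩
  have hN : l₁ * a 0 - D₁ * a 1 ≠ 0 := by
    intro hN
    have hB : B = 0 := by simp only [B, hN, zero_div]
    have hle := rank_hankel_le_one_of_eq_geometric (a := a) (m := d - 1) (n := 3) A (l₁ / D₁)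
      fun i hi j hj => by rw [hform (i + j) (by omega), hB, zero_mul, add_zero]
    exact absurd (hrank.symm.trans_le hle) (by norm_num)
  have hδζ' : 1 - δ * ζ ≠ 0 := sub_ne_zero.mpr hδζ.symm
  rw [sum_choose_mul_pow_eq_of_binet hform]
  refine add_mul_pow_eq_zero_of_pow_eq (w := δ * ζ) (div_ne_zero hN h₁₂) ?_ ?_
  · rw [mul_pow, hζ, mul_one, hδ]
    simp only [A, B]
    field_simp
    ring
  · field_simp
    ring

theorem stmt17 (d : ℕ) (hd : 3 ≤ d) (a : ℕ → ℂ) (ha₀ : a 0 ≠ 0)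
    (D₁ D₂ D₃ : ℂ) (hD₁ : D₁ = a 0 * a 2 - (a 1)^2) (hD₂ : D₂ = a 0 * a 3 - a 1 * a 2)
    (hD₃ : D₃ = a 1 * a 3 - (a 2)^2)
    (hrank : (Matrix.of fun (i : Fin (d-1)) (j : Fin 3) => a ((i : ℕ) + (j : ℕ))).rank = 2)
    (hD₁ne : D₁ ≠ 0) (hdisc : D₂^2 ≠ 4*D₁*D₃)
    (l₁ l₂ : ℂ) (hroot₁ : l₁^2 - D₂*l₁ + D₁*D₃ = 0)
    (hroot₂ : l₂^2 - D₂*l₂ + D₁*D₃ = 0) (hne : l₁ ≠ l₂) :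
    (∀ x : ℂ,
      ∑ i ∈ Finset.range (d+1), (d.choose i : ℂ) * a i * x^(d-i)
        = (l₂ * a 0 - D₁ * a 1)/(l₂ - l₁) * (x + l₁/D₁)^d
          + (l₁ * a 0 - D₁ * a 1)/(l₁ - l₂) * (x + l₂/D₁)^d) ∧
    ∀ δ ζ : ℂ, δ^d = (l₂ * a 0 - D₁ * a 1)/(l₁ * a 0 - D₁ * a 1) → ζ^d = 1 →
      δ*ζ ≠ 1 →
      ∑ i ∈ Finset.range (d+1),
          (d.choose i : ℂ) * a i * ((δ*ζ*l₁ - l₂)/(D₁*(1 - δ*ζ)))^(d-i) = 0 :=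
  stmt17_general d a D₁ D₂ D₃ hD₁ hD₂ hD₃ hrank hD₁ne l₁ l₂ hroot₁ hroot₂ hne
end

section
/- Let f(x) = a₀x^d + C(d,1)a₁x^{d−1} + ... + a_d over ℂ, d ≥ 3, a₀ ≠ 0, with D₁ = a₀a₂ − a₁² ≠ 0 and D₂² = 4D₁D₃, where D₂ = a₀a₃ − a₁a₂, D₃ = a₁a₃ − a₂², and assume the Hankel matrix with rows (aᵢ, a_{i+1}, a_{i+2}), 0 ≤ i ≤ d−2, has rank 2. Then x = −D₂/(2D₁) is a root of f of multiplicity d−1, and x = (d−1)D₂/(2D₁) − d·a₁/a₀ is the remaining root. -/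
open Polynomial

lemma lemA18 (n : ℕ) (x α : ℂ) :
    ∑ i ∈ Finset.range (n+1), (n.choose i : ℂ) * α^i * x^(n-i) = (x+α)^n := by
  rw [add_comm x α, add_pow]
  exact Finset.sum_congr rfl fun i _ => by ring

lemma lemB18 (n : ℕ) (x α : ℂ) :
    ∑ i ∈ Finset.range (n+1), (n.choose i : ℂ) * i * α^(i-1) * x^(n-i)
      = n * (x+α)^(n-1) := by
  cases n with
  | zero => simp
  | succ m =>
    rw [Finset.sum_range_succ']
    simp only [Nat.cast_zero, mul_zero, zero_mul, add_zero, Nat.add_sub_cancel]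
    have key : ∀ j ∈ Finset.range (m+1),
        ((m+1).choose (j+1) : ℂ) * ((j+1 : ℕ) : ℂ) * α^j * x^(m+1-(j+1))
          = (((m+1:ℕ)) : ℂ) * ((m.choose j : ℂ) * α^j * x^(m-j)) := by
      intro j hj
      have hc : (m+1) * m.choose j = (m+1).choose (j+1) * (j+1) := Nat.add_one_mul_choose_eq m j
      have hc' : ((m+1 : ℕ) : ℂ) * (m.choose j : ℂ)
          = ((m+1).choose (j+1) : ℂ) * ((j+1 : ℕ) : ℂ) := by
        exact_mod_cast congrArg (Nat.cast : ℕ → ℂ) hc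
      have hms : m+1-(j+1) = m - j := by omega
      rw [hms]
      linear_combination α^j * x^(m-j) * hc'.symm
    rw [Finset.sum_congr rfl key, ← Finset.mul_sum, lemA18]

lemma lemC18 (n : ℕ) (x α c e : ℂ) :
    ∑ i ∈ Finset.range (n+1), (n.choose i : ℂ) * (c * α^i + e * i * α^(i-1)) * x^(n-i)
      = c * (x+α)^n + e * (n * (x+α)^(n-1)) := by
  rw [← lemA18 n x α, ← lemB18 n x α, Finset.mul_sum, Finset.mul_sum,
    ← Finset.sum_add_distrib]
  exact Finset.sum_congr rfl fun i _ => by ring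

lemma kervec18 {n : ℕ} (A : Matrix (Fin n) (Fin 3) ℂ) (h : A.rank = 2) :
    ∃ w : Fin 3 → ℂ, w ≠ 0 ∧ A.mulVec w = 0 := by
  have hk := LinearMap.finrank_range_add_finrank_ker A.mulVecLin
  rw [Matrix.rank] at h
  rw [h] at hk
  simp [Module.finrank_fintype_fun_eq_card] at hk
  have hne : LinearMap.ker A.mulVecLin ≠ ⊥ := by
    intro hb
    rw [hb] at hk
    simp at hk
  obtain ⟨w, hw, hwne⟩ := Submodule.ne_bot_iff _ |>.mp hne
  exact ⟨w, hwne, hw⟩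

theorem stmt18 (d : ℕ) (hd : 3 ≤ d) (a : ℕ → ℂ) (ha₀ : a 0 ≠ 0)
    (D₁ D₂ D₃ : ℂ) (hD₁ : D₁ = a 0 * a 2 - (a 1)^2) (hD₂ : D₂ = a 0 * a 3 - a 1 * a 2)
    (hD₃ : D₃ = a 1 * a 3 - (a 2)^2)
    (hrank : (Matrix.of fun (i : Fin (d-1)) (j : Fin 3) => a ((i : ℕ) + (j : ℕ))).rank = 2)
    (hD₁ne : D₁ ≠ 0) (hdisc : D₂^2 = 4*D₁*D₃)
    (f : Polynomial ℂ)
    (hf : f = ∑ i ∈ Finset.range (d+1), C ((d.choose i : ℂ) * a i) * X^(d-i)) :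
    f.rootMultiplicity (-D₂/(2*D₁)) = d - 1 ∧
    f.eval ((d - 1 : ℂ)*D₂/(2*D₁) - d * a 1 / a 0) = 0 := by
  obtain ⟨m, rfl⟩ : ∃ m, d = m + 3 := ⟨d - 3, by omega⟩
  -- kernel vector and recursion
  obtain ⟨w, hwne, hw⟩ := kervec18 _ hrank
  have hrec : ∀ i : ℕ, i < m + 2 →
      a i * w 0 + a (i+1) * w 1 + a (i+2) * w 2 = 0 := by
    intro i hi
    have h := congrFun hw ⟨i, by omega⟩
    simpa [Matrix.mulVec, dotProduct, Fin.sum_univ_three, mul_comm] using h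
  have h0 := hrec 0 (by omega)
  have h1 := hrec 1 (by omega)
  norm_num at h0 h1
  -- w 2 ≠ 0
  have hw2 : w 2 ≠ 0 := by
    intro h2
    simp only [h2, mul_zero, add_zero] at h0 h1
    have hw0 : w 0 = 0 := by
      have hz : w 0 * D₁ = 0 := by rw [hD₁]; linear_combination a 2 * h0 - a 1 * h1
      rcases mul_eq_zero.mp hz with h | h
      · exact h
      · exact absurd h hD₁ne
    simp only [hw0, mul_zero, zero_add] at h0 h1
    have hw1 : w 1 = 0 := by
      have hz : w 1 * D₁ = 0 := by rw [hD₁]; linear_combination a 0 * h1 - a 1 * h0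
      rcases mul_eq_zero.mp hz with h | h
      · exact h
      · exact absurd h hD₁ne
    apply hwne
    funext j
    fin_cases j <;> simp [hw0, hw1, h2]
  set α : ℂ := D₂/(2*D₁) with hα
  have hD2α : D₂ = 2*α*D₁ := by
    rw [hα]; field_simp
  have hi1 : w 2 * D₂ = -(w 1 * D₁) := by
    rw [hD₁, hD₂]; linear_combination a 0 * h1 - a 1 * h0
  have hi2 : w 2 * D₃ = w 0 * D₁ := by
    rw [hD₁, hD₃]; linear_combination a 1 * h1 - a 2 * h0
  rw [hD2α] at hi1 hdisc
  have hw1 : w 1 = -(2*α*w 2) := by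
    have hz : (w 1 + 2*α*w 2) * D₁ = 0 := by linear_combination hi1
    rcases mul_eq_zero.mp hz with h | h
    · linear_combination h
    · exact absurd h hD₁ne
  have hw0 : w 0 = α^2 * w 2 := by
    have hz : (w 0 - α^2 * w 2) * (4*D₁^2) = 0 := by
      linear_combination (-(4*D₁))*hi2 - w 2 * hdisc
    rcases mul_eq_zero.mp hz with h | h
    · linear_combination h
    · exact absurd h (mul_ne_zero (by norm_num) (pow_ne_zero 2 hD₁ne))
  have hrec2 : ∀ i : ℕ, i < m + 2 → a (i+2) = 2*α*a (i+1) - α^2 * a i := by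
    intro i hi
    have h := hrec i hi
    rw [hw0, hw1] at h
    have hz : (a (i+2) - (2*α*a (i+1) - α^2 * a i)) * w 2 = 0 := by
      linear_combination h
    rcases mul_eq_zero.mp hz with h' | h'
    · linear_combination h'
    · exact absurd h' hw2
  have h2eq : a 2 = 2*α*a 1 - α^2 * a 0 := by
    have := hrec2 0 (by omega); simpa using this
  have hD1e : D₁ = -(a 1 - a 0 * α)^2 := by
    rw [hD₁, h2eq]; ring
  have he : a 1 - a 0 * α ≠ 0 := by
    intro h
    exact hD₁ne (by rw [hD1e, h]; ring)
  -- closed form for coefficients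
  have key : ∀ i, i ≤ m + 3 →
      a i = a 0 * α^i + (a 1 - a 0 * α) * i * α^(i-1) := by
    intro i
    induction i using Nat.strong_induction_on with
    | _ i ih =>
      match i with
      | 0 => intro _; simp
      | 1 => intro _; norm_num
      | (k+2) =>
        intro hk
        have hr := hrec2 k (by omega)
        have ih1 := ih (k+1) (by omega) (by omega)
        have ih0 := ih k (by omega) (by omega)
        rw [hr, ih1, ih0]
        rcases k with _ | n
        · norm_num; ring
        · simp only [Nat.add_sub_cancel]
          push_cast
          ring
  -- the remaining root
  set s : ℂ := ((m+3:ℕ) - 1 : ℂ)*D₂/(2*D₁) - (m+3:ℕ) * a 1 / a 0 with hsdef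
  have hs : a 0 * s + a 0 * α + (a 1 - a 0 * α)*((m+3:ℕ):ℂ) = 0 := by
    rw [hsdef, hD2α]
    field_simp
    ring
  -- factorization of f
  have hfeq : f = C (a 0) * (X + C α)^(m+2) * (X - C s) := by
    apply Polynomial.funext
    intro x
    rw [hf]
    rw [Polynomial.eval_finset_sum]
    simp only [eval_mul, eval_pow, eval_C, eval_X, eval_sub, eval_add]
    rw [Finset.sum_congr rfl (fun i hi => by
      rw [key i (by have := Finset.mem_range.mp hi; omega)])]
    rw [lemC18 (m+3) x α (a 0) (a 1 - a 0 * α)]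
    rw [show m+3-1 = m+2 from rfl]
    push_cast
    push_cast at hs
    linear_combination ((x+α)^(m+2)) * hs
  have hXC : (X + C α : ℂ[X]) = X - C (-α) := by rw [map_neg, sub_neg_eq_add]
  have hCne : (C (a 0) : ℂ[X]) ≠ 0 := by
    simpa using ha₀
  have hPne : ((X - C (-α) : ℂ[X]))^(m+2) ≠ 0 := pow_ne_zero _ (X_sub_C_ne_zero _)
  have hLne : (X - C s : ℂ[X]) ≠ 0 := X_sub_C_ne_zero s
  constructor
  · -- root multiplicity
    have hr : -D₂/(2*D₁) = -α := by rw [neg_div, ← hα]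
    rw [hfeq, hr, hXC]
    rw [rootMultiplicity_mul (mul_ne_zero (mul_ne_zero hCne hPne) hLne),
      rootMultiplicity_mul (mul_ne_zero hCne hPne),
      rootMultiplicity_C, rootMultiplicity_X_sub_C_pow]
    have hlast : rootMultiplicity (-α) (X - C s) = 0 := by
      apply rootMultiplicity_eq_zero
      simp only [IsRoot, eval_sub, eval_X, eval_C]
      intro hzero
      have hsval : s = -α := by linear_combination -hzero
      rw [hsval] at hs
      have : (a 1 - a 0 * α) * ((m+3:ℕ):ℂ) = 0 := by linear_combination hs
      rcases mul_eq_zero.mp this with h' | h'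
      · exact he h'
      · exact absurd h' (Nat.cast_ne_zero.mpr (by omega))
    rw [hlast]
    omega
  · rw [hfeq]
    show eval s _ = 0
    simp
end
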